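/- arXiv:1204.6311 — 2 statements merged into one kernel-verified Lean document; each statement's English description precedes it below -/
import Mathlib

section
/- If |c| > 2, then the filled-in Julia set K(c) is totally disconnected: every connected component of K(c) is a single point. -/
/-- The twisted tent map with folding line `Im z = -1`. -/
noncomputable def ttm (c : ℂ) (z : ℂ) : ℂ :=
  if -1 ≤ (c * z).im then c * z else (starRingEnd ℂ) (c * z) - 2 * Complex.I

/-- The filled-in Julia set: points with bounded forward orbit. -/
def ttmK (c : ℂ) : Set ℂ :=
  {z : ℂ | Bornology.IsBounded (Set.range fun n : ℕ => (ttm c)^[n] z)}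

lemma ttm_of_ge (c z : ℂ) (h : -1 ≤ (c * z).im) : ttm c z = c * z := if_pos h

lemma ttm_of_le (c z : ℂ) (h : (c * z).im ≤ -1) :
    ttm c z = (starRingEnd ℂ) (c * z) - 2 * Complex.I := by
  unfold ttm
  split_ifs with h'
  · have him : c.re * z.im + c.im * z.re = -1 := by
      rw [← Complex.mul_im]; exact le_antisymm h h'
    apply Complex.ext <;> simp <;> linarith
  · rfl

lemma ttm_dist_pos (c z w : ℂ) (hz : -1 ≤ (c * z).im) (hw : -1 ≤ (c * w).im) :
    dist (ttm c z) (ttm c w) = ‖c‖ * dist z w := by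
  rw [ttm_of_ge c z hz, ttm_of_ge c w hw, dist_eq_norm, dist_eq_norm, ← mul_sub, norm_mul]

lemma ttm_dist_neg (c z w : ℂ) (hz : (c * z).im ≤ -1) (hw : (c * w).im ≤ -1) :
    dist (ttm c z) (ttm c w) = ‖c‖ * dist z w := by
  rw [ttm_of_le c z hz, ttm_of_le c w hw, dist_eq_norm, dist_eq_norm]
  have : (starRingEnd ℂ) (c * z) - 2 * Complex.I - ((starRingEnd ℂ) (c * w) - 2 * Complex.I)
      = (starRingEnd ℂ) (c * (z - w)) := by
    rw [mul_sub, map_sub]; ring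
  rw [this, RCLike.norm_conj, norm_mul]

lemma ttm_dist_fold (c p : ℂ) (hp : (c * p).im = -1) (a : ℂ) :
    dist (ttm c a) (ttm c p) = ‖c‖ * dist a p := by
  rcases le_total (-1) ((c * a).im) with h | h
  · exact ttm_dist_pos c a p h hp.ge
  · exact ttm_dist_neg c a p h hp.le

lemma ttm_continuous (c : ℂ) : Continuous (ttm c) := by
  unfold ttm
  apply Continuous.if_le
  · exact continuous_const.mul continuous_id
  · exact (Complex.continuous_conj.comp (continuous_const.mul continuous_id)).sub continuous_const
  · exact continuous_const
  · exact Complex.continuous_im.comp (continuous_const.mul continuous_id)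
  · intro x hx
    have hx' : c.re * x.im + c.im * x.re = -1 := by
      rw [← Complex.mul_im]; exact hx.symm
    apply Complex.ext <;> simp <;> linarith

lemma ttm_norm_ge (c z : ℂ) : ‖c‖ * ‖z‖ - 2 ≤ ‖ttm c z‖ := by
  unfold ttm
  split_ifs with h
  · rw [norm_mul]; linarith [norm_nonneg (c * z)]
  · have h1 : ‖(starRingEnd ℂ) (c * z)‖ - ‖(2 : ℂ) * Complex.I‖
        ≤ ‖(starRingEnd ℂ) (c * z) - 2 * Complex.I‖ := norm_sub_norm_le _ _
    have h2 : ‖(starRingEnd ℂ) (c * z)‖ = ‖c‖ * ‖z‖ := by rw [RCLike.norm_conj, norm_mul]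
    have h3 : ‖(2 : ℂ) * Complex.I‖ = 2 := by simp
    linarith

lemma ttm_mem_K (c z : ℂ) (hz : z ∈ ttmK c) : ttm c z ∈ ttmK c := by
  simp only [ttmK, Set.mem_setOf_eq] at hz ⊢
  refine hz.subset ?_
  rintro x ⟨n, rfl⟩
  exact ⟨n + 1, (Function.iterate_succ_apply (ttm c) n z).symm⟩

lemma ttm_iterate_mem_K (c z : ℂ) (hz : z ∈ ttmK c) (n : ℕ) : (ttm c)^[n] z ∈ ttmK c := by
  induction n with
  | zero => exact hz
  | succ n ih => rw [Function.iterate_succ_apply']; exact ttm_mem_K c _ ih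

lemma mem_K_norm_le (c : ℂ) (hc : 2 < ‖c‖) (z : ℂ) (hz : z ∈ ttmK c) :
    ‖z‖ ≤ 2 / (‖c‖ - 2) := by
  set R : ℝ := 2 / (‖c‖ - 2) with hR
  by_contra hzR
  push_neg at hzR
  have hne : (0:ℝ) < ‖c‖ - 2 := by linarith
  have hRmul : R * (‖c‖ - 2) = 2 := div_mul_cancel₀ _ hne.ne'
  have hcR : ‖c‖ * R - 2 = 2 * R := by linear_combination hRmul
  have key : ∀ n : ℕ, R + ‖c‖ ^ n * (‖z‖ - R) ≤ ‖(ttm c)^[n] z‖ := by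
    intro n
    induction n with
    | zero => simp
    | succ n ih =>
      have h1 := ttm_norm_ge c ((ttm c)^[n] z)
      have h2 : ‖c‖ * (R + ‖c‖ ^ n * (‖z‖ - R)) ≤ ‖c‖ * ‖(ttm c)^[n] z‖ := by
        apply mul_le_mul_of_nonneg_left ih (by positivity)
      have hRpos : 0 < R := div_pos two_pos hne
      have hpow : (0:ℝ) < ‖c‖ ^ n := by positivity
      calc R + ‖c‖ ^ (n+1) * (‖z‖ - R) ≤ ‖c‖ * (R + ‖c‖ ^ n * (‖z‖ - R)) - 2 := by
            rw [pow_succ]; nlinarith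
        _ ≤ ‖c‖ * ‖(ttm c)^[n] z‖ - 2 := by linarith
        _ ≤ ‖(ttm c)^[n+1] z‖ := by rw [Function.iterate_succ_apply']; exact h1
  have hzb : Bornology.IsBounded (Set.range fun n : ℕ => (ttm c)^[n] z) := hz
  obtain ⟨C, hC⟩ := isBounded_iff_forall_norm_le.mp hzb
  have hε : 0 < ‖z‖ - R := by linarith
  have : Filter.Tendsto (fun n : ℕ => ‖c‖ ^ n) Filter.atTop Filter.atTop :=
    tendsto_pow_atTop_atTop_of_one_lt (by linarith)
  obtain ⟨n, hn⟩ := (this.eventually_ge_atTop ((C - R) / (‖z‖ - R) + 1)).exists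
  have h1 : ‖(ttm c)^[n] z‖ ≤ C := hC _ ⟨n, rfl⟩
  have h2 := key n
  have h3 : ((C - R) / (‖z‖ - R)) * (‖z‖ - R) = C - R := div_mul_cancel₀ _ hε.ne'
  nlinarith [mul_le_mul_of_nonneg_right hn hε.le]

/-- Expansion step on a preconnected set. -/
lemma ttm_step (c : ℂ) (t : Set ℂ) (ht : IsPreconnected t) {a b : ℂ}
    (ha : a ∈ t) (hb : b ∈ t) :
    ∃ a' ∈ ttm c '' t, ∃ b' ∈ ttm c '' t, (‖c‖ / 2) * dist a b ≤ dist a' b' := by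
  have hc0 : (0:ℝ) ≤ ‖c‖ := norm_nonneg c
  by_cases hfold : ∃ p ∈ t, (c * p).im = -1
  · obtain ⟨p, hp, hpe⟩ := hfold
    have htri := dist_triangle a p b
    rcases le_total (dist a b / 2) (dist a p) with hd | hd
    · refine ⟨_, ⟨a, ha, rfl⟩, _, ⟨p, hp, rfl⟩, ?_⟩
      rw [ttm_dist_fold c p hpe a]
      nlinarith [dist_nonneg (x := a) (y := b)]
    · have hd' : dist a b / 2 ≤ dist p b := by linarith
      refine ⟨_, ⟨b, hb, rfl⟩, _, ⟨p, hp, rfl⟩, ?_⟩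
      rw [ttm_dist_fold c p hpe b, dist_comm p b] at *
      nlinarith [dist_nonneg (x := a) (y := b)]
  · push_neg at hfold
    have hcont : ContinuousOn (fun w => (c * w).im) t :=
      (Complex.continuous_im.comp (continuous_const.mul continuous_id)).continuousOn
    have hside : (∀ w ∈ t, -1 ≤ (c * w).im) ∨ (∀ w ∈ t, (c * w).im ≤ -1) := by
      by_contra hcon
      push_neg at hcon
      obtain ⟨⟨u, hu, hu'⟩, v, hv, hv'⟩ := hcon
      have : (-1 : ℝ) ∈ (fun w => (c * w).im) '' t := by
        apply ht.intermediate_value hu hv hcont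
        exact ⟨hu'.le, hv'.le⟩
      obtain ⟨p, hp, hpe⟩ := this
      exact hfold p hp hpe
    have hhalf : (‖c‖ / 2) * dist a b ≤ ‖c‖ * dist a b := by
      nlinarith [dist_nonneg (x := a) (y := b)]
    rcases hside with hs | hs
    · exact ⟨_, ⟨a, ha, rfl⟩, _, ⟨b, hb, rfl⟩,
        by rw [ttm_dist_pos c a b (hs a ha) (hs b hb)]; exact hhalf⟩
    · exact ⟨_, ⟨a, ha, rfl⟩, _, ⟨b, hb, rfl⟩,
        by rw [ttm_dist_neg c a b (hs a ha) (hs b hb)]; exact hhalf⟩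

theorem ttmK_totally_disconnected (c : ℂ) (h : 2 < ‖c‖) :
    IsTotallyDisconnected (ttmK c) := by
  intro t hts htconn z hz w hw
  have hc : 2 < ‖c‖ := h
  set R : ℝ := 2 / (‖c‖ - 2) with hR
  set κ : ℝ := ‖c‖ / 2 with hκdef
  have hκ : 1 < κ := by rw [hκdef]; linarith
  have key : ∀ n : ℕ, ∃ a ∈ (ttm c)^[n] '' t, ∃ b ∈ (ttm c)^[n] '' t,
      κ ^ n * dist z w ≤ dist a b := by
    intro n
    induction n with
    | zero => exact ⟨z, ⟨z, hz, by simp⟩, w, ⟨w, hw, by simp⟩, by simp⟩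
    | succ n ih =>
      obtain ⟨a, ha, b, hb, hab⟩ := ih
      have hconn : IsPreconnected ((ttm c)^[n] '' t) :=
        htconn.image _ ((ttm_continuous c).iterate n).continuousOn
      obtain ⟨a', ha', b', hb', hab'⟩ := ttm_step c _ hconn ha hb
      have himg : ttm c '' ((ttm c)^[n] '' t) = (ttm c)^[n+1] '' t := by
        rw [Set.image_image]
        apply Set.image_congr'
        intro x
        exact (Function.iterate_succ_apply' (ttm c) n x).symm
      rw [himg] at ha' hb'
      refine ⟨a', ha', b', hb', ?_⟩
      calc κ ^ (n+1) * dist z w = κ * (κ ^ n * dist z w) := by ring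
        _ ≤ κ * dist a b := by
            apply mul_le_mul_of_nonneg_left hab (by linarith)
        _ ≤ dist a' b' := hab'
  have hbound : ∀ n : ℕ, κ ^ n * dist z w ≤ 2 * R := by
    intro n
    obtain ⟨a, ha, b, hb, hab⟩ := key n
    obtain ⟨x, hx, rfl⟩ := ha
    obtain ⟨y, hy, rfl⟩ := hb
    have hxK := ttm_iterate_mem_K c x (hts hx) n
    have hyK := ttm_iterate_mem_K c y (hts hy) n
    have h1 := mem_K_norm_le c hc _ hxK
    have h2 := mem_K_norm_le c hc _ hyK
    have h3 : dist ((ttm c)^[n] x) ((ttm c)^[n] y) ≤ ‖(ttm c)^[n] x‖ + ‖(ttm c)^[n] y‖ := by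
      rw [dist_eq_norm]; exact norm_sub_le _ _
    linarith
  by_contra hzw
  have hd : 0 < dist z w := dist_pos.mpr hzw
  have htend : Filter.Tendsto (fun n : ℕ => κ ^ n) Filter.atTop Filter.atTop :=
    tendsto_pow_atTop_atTop_of_one_lt hκ
  obtain ⟨n, hn⟩ := (htend.eventually_ge_atTop (2 * R / dist z w + 1)).exists
  have := hbound n
  have h3 : (2 * R / dist z w) * dist z w = 2 * R := by field_simp
  nlinarith [mul_le_mul_of_nonneg_right hn hd.le]
end

section
/- Suppose |c| > 1 and Im(c) > 0, and let ℓ_0 = 2i·(1 - conj(c))/(|c|² - 1). Then every point z ∈ K(c) satisfies Re(z) ≥ Re(ℓ_0). -/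
/-- The nonzero fixed point of the twisted tent map. -/
noncomputable def ell0 (c : ℂ) : ℂ :=
  2 * Complex.I * (1 - (starRingEnd ℂ) c) / (((‖c‖ : ℂ)) ^ 2 - 1)

lemma ttm_re (c w : ℂ) : (ttm c w).re = (c * w).re := by
  unfold ttm; split
  · rfl
  · simp

lemma ttm_im_ge (c w : ℂ) : -(c * w).im - 2 ≤ (ttm c w).im := by
  unfold ttm; split
  · rename_i hh; linarith
  · simp

lemma key (c z : ℂ) (hb : 0 ≤ c.im) :
    (ttm c (ttm c z)).re ≤ (‖c‖) ^ 2 * z.re + 2 * c.im := by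
  have h1 := ttm_re c (ttm c z)
  have h2 := ttm_re c z
  have h3 := ttm_im_ge c z
  have h4 : c.im * (-(c * z).im - 2) ≤ c.im * (ttm c z).im :=
    mul_le_mul_of_nonneg_left h3 hb
  have habs : (‖c‖) ^ 2 = c.re ^ 2 + c.im ^ 2 := by
    rw [Complex.sq_norm, Complex.normSq_apply]; ring
  have h5 : c.re * (c * z).re + c.im * (c * z).im = (‖c‖) ^ 2 * z.re := by
    rw [Complex.mul_re, Complex.mul_im, habs]; ring
  rw [h1, Complex.mul_re, h2]
  linarith

lemma ell0_re (c : ℂ) (h : 1 < ‖c‖) :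
    (ell0 c).re = -2 * c.im / ((‖c‖) ^ 2 - 1) := by
  have hD : (‖c‖) ^ 2 - 1 ≠ 0 := by nlinarith [norm_nonneg c]
  have hden : (((‖c‖ : ℂ)) ^ 2 - 1) = (((‖c‖) ^ 2 - 1 : ℝ) : ℂ) := by
    push_cast; ring
  rw [ell0, hden, Complex.div_ofReal_re]
  congr 1
  simp [Complex.mul_re]

theorem ttmK_re_ge_re_ell0 (c : ℂ) (h : 1 < ‖c‖) (hb : 0 < c.im) :
    ∀ z ∈ ttmK c, (ell0 c).re ≤ z.re := by
  intro z hz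
  by_contra hlt
  push_neg at hlt
  obtain ⟨M, hM⟩ := isBounded_iff_forall_norm_le.mp (show Bornology.IsBounded (Set.range fun n : ℕ => (ttm c)^[n] z) from hz)
  set r : ℕ → ℝ := fun n => (ell0 c).re - ((ttm c)^[n] z).re with hr
  have habs0 : 0 < (‖c‖) ^ 2 := by positivity
  have habs1 : 1 < (‖c‖) ^ 2 := by nlinarith
  have hfix : (‖c‖) ^ 2 * (ell0 c).re + 2 * c.im = (ell0 c).re := by
    rw [ell0_re c h]
    have hD : (‖c‖) ^ 2 - 1 ≠ 0 := by nlinarith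
    field_simp
    ring
  have hstep : ∀ n, (‖c‖) ^ 2 * r n ≤ r (n + 2) := by
    intro n
    have hk := key c ((ttm c)^[n] z) hb.le
    have e : (ttm c)^[n + 2] z = ttm c (ttm c ((ttm c)^[n] z)) := by
      rw [Function.iterate_succ_apply', Function.iterate_succ_apply']
    simp only [hr, e]
    linarith
  have hiter : ∀ m, ((‖c‖) ^ 2) ^ m * r 0 ≤ r (2 * m) := by
    intro m
    induction m with
    | zero => simp
    | succ k ih =>
      have h2 := hstep (2 * k)
      have h3 : (‖c‖) ^ 2 * (((‖c‖) ^ 2) ^ k * r 0)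
          ≤ (‖c‖) ^ 2 * r (2 * k) :=
        mul_le_mul_of_nonneg_left ih habs0.le
      have e : 2 * (k + 1) = 2 * k + 2 := by ring
      calc ((‖c‖) ^ 2) ^ (k + 1) * r 0
          = (‖c‖) ^ 2 * (((‖c‖) ^ 2) ^ k * r 0) := by ring
        _ ≤ (‖c‖) ^ 2 * r (2 * k) := h3
        _ ≤ r (2 * k + 2) := h2
        _ = r (2 * (k + 1)) := by rw [e]
  have hr0 : 0 < r 0 := by
    simp only [hr, Function.iterate_zero, id_eq]
    linarith
  have hbound : ∀ m, r (2 * m) ≤ (ell0 c).re + M := by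
    intro m
    have hm := hM ((ttm c)^[2 * m] z) ⟨2 * m, rfl⟩
    have h1 : |((ttm c)^[2 * m] z).re| ≤ ‖(ttm c)^[2 * m] z‖ :=
      Complex.abs_re_le_norm _
    have h2 : -((ttm c)^[2 * m] z).re ≤ |((ttm c)^[2 * m] z).re| := neg_le_abs _
    have h3 : ‖(ttm c)^[2 * m] z‖ ≤ M := by
      exact hm
    simp only [hr]
    linarith
  obtain ⟨m, hm⟩ := pow_unbounded_of_one_lt (((ell0 c).re + M) / r 0) habs1
  rw [div_lt_iff₀ hr0] at hm
  linarith [hiter m, hbound m]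
end
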